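/- arXiv:2303.01752 — 4 statements merged into one kernel-verified Lean document; each statement's English description precedes it below -/
import Mathlib

section
/- Let p be a prime, n ≥ 1, and let γ ∈ SL_n(ℚ_p) be a matrix whose characteristic polynomial is irreducible over ℚ_p. Then the set {g ∈ SL_n(ℚ_p) : every entry of g⁻¹ · γ · g lies in ℤ_p} is a compact subset of SL_n(ℚ_p). -/
open Matrix Polynomial

section Aux

variable {p : ℕ} [hp : Fact p.Prime] {n : ℕ}

/-- The matrix whose columns are `w, γw, ..., γ^{n-1}w`. -/
private noncomputable def colMat (γ : Matrix (Fin n) (Fin n) ℚ_[p]) (w : Fin n → ℚ_[p]) :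
    Matrix (Fin n) (Fin n) ℚ_[p] :=
  Matrix.of fun i k => ((γ ^ (k : ℕ)) *ᵥ w) i

private lemma continuous_colMat (γ : Matrix (Fin n) (Fin n) ℚ_[p]) :
    Continuous fun w => colMat γ w := by
  apply continuous_matrix
  intro i k
  simp only [colMat, Matrix.of_apply, Matrix.mulVec, dotProduct]
  exact continuous_finset_sum _ fun j _ => continuous_const.mul (continuous_apply j)

/-- For nonzero `q` of degree `< n`, `q(γ)` has a left inverse. -/
private lemma aeval_left_inv (γ : Matrix (Fin n) (Fin n) ℚ_[p])
    (hirr : Irreducible γ.charpoly) (ht : Nontrivial (Matrix (Fin n) (Fin n) ℚ_[p]))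
    (q : Polynomial ℚ_[p]) (hq : q ≠ 0) (hdeg : q.natDegree < n) :
    ∃ a : Polynomial ℚ_[p], (aeval γ a) * (aeval γ q) = 1 := by
  have hnd : γ.charpoly.natDegree = n := by
    simpa using γ.charpoly_natDegree_eq_dim
  have hndvd : ¬ γ.charpoly ∣ q := by
    intro h
    have := Polynomial.natDegree_le_of_dvd h hq
    omega
  have hcop : IsCoprime γ.charpoly q := (hirr.coprime_iff_not_dvd).mpr hndvd
  obtain ⟨a, b, hab⟩ := hcop
  refine ⟨b, ?_⟩
  have h2 := congrArg (aeval γ) hab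
  simpa [Matrix.aeval_self_charpoly] using h2

private lemma colMat_det_ne_zero (hn : 1 ≤ n) (γ : Matrix (Fin n) (Fin n) ℚ_[p])
    (hirr : Irreducible γ.charpoly) {w : Fin n → ℚ_[p]} (hw : w ≠ 0) :
    (colMat γ w).det ≠ 0 := by
  have : Nonempty (Fin n) := ⟨⟨0, hn⟩⟩
  have ht : Nontrivial (Matrix (Fin n) (Fin n) ℚ_[p]) := inferInstance
  intro hdet
  obtain ⟨v, hv, hBv⟩ := (Matrix.exists_mulVec_eq_zero_iff).mpr hdet
  -- the polynomial with coefficients v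
  set q : Polynomial ℚ_[p] := ∑ k : Fin n, Polynomial.C (v k) * X ^ (k : ℕ) with hqdef
  -- q ≠ 0
  obtain ⟨k₀, hk₀⟩ : ∃ k, v k ≠ 0 := by
    by_contra h
    push_neg at h
    exact hv (funext h)
  have hcoeff : q.coeff (k₀ : ℕ) = v k₀ := by
    rw [hqdef, Polynomial.finset_sum_coeff]
    rw [Finset.sum_eq_single k₀]
    · simp
    · intro b _ hb
      have : (k₀ : ℕ) ≠ (b : ℕ) := fun h => hb (Fin.ext h.symm)
      simp only [Polynomial.coeff_C_mul, Polynomial.coeff_X_pow, mul_ite, mul_one, mul_zero,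
        ite_eq_right_iff]
      exact fun h => absurd h this
    · simp
  have hq : q ≠ 0 := fun h => hk₀ (by rw [← hcoeff, h, Polynomial.coeff_zero])
  have hdeg : q.natDegree < n := by
    have : q.natDegree ≤ n - 1 := by
      apply Polynomial.natDegree_sum_le_of_forall_le
      intro k _
      exact le_trans (Polynomial.natDegree_C_mul_X_pow_le _ _) (by omega)
    omega
  obtain ⟨a, ha⟩ := aeval_left_inv γ hirr ht q hq hdeg
  -- q(γ) *ᵥ w = colMat γ w *ᵥ v = 0
  have hqw : (aeval γ q) *ᵥ w = 0 := by
    have h1 : aeval γ q = ∑ k : Fin n, v k • γ ^ (k : ℕ) := by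
      rw [hqdef, map_sum]
      refine Finset.sum_congr rfl fun k _ => ?_
      rw [_root_.map_mul, aeval_C, map_pow, aeval_X, Algebra.smul_def]
    rw [h1, ← hBv]
    funext i
    simp only [Matrix.mulVec, dotProduct, colMat, Matrix.of_apply,
      Matrix.sum_apply, Matrix.smul_apply, smul_eq_mul, Finset.sum_mul, Finset.mul_sum]
    rw [Finset.sum_comm]
    exact Finset.sum_congr rfl fun k _ => Finset.sum_congr rfl fun l _ => by ring
  have hw0 : w = 0 := by
    have : (aeval γ a) *ᵥ ((aeval γ q) *ᵥ w) = w := by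
      rw [Matrix.mulVec_mulVec, ha, Matrix.one_mulVec]
    rw [hqw, Matrix.mulVec_zero] at this
    exact this.symm
  exact hw hw0

/-- Uniform lower bound `δ‖w‖ⁿ ≤ ‖det (colMat γ w)‖`. -/
private lemma exists_delta (hn : 1 ≤ n) (γ : Matrix (Fin n) (Fin n) ℚ_[p])
    (hirr : Irreducible γ.charpoly) :
    ∃ δ : ℝ, 0 < δ ∧ ∀ w : Fin n → ℚ_[p], δ * ‖w‖ ^ n ≤ ‖(colMat γ w).det‖ := by
  have : Nonempty (Fin n) := ⟨⟨0, hn⟩⟩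
  have hS : IsCompact (Metric.sphere (0 : Fin n → ℚ_[p]) 1) := isCompact_sphere _ _
  have hne : (Metric.sphere (0 : Fin n → ℚ_[p]) 1).Nonempty := by
    refine ⟨fun _ => 1, ?_⟩
    simp [pi_norm_const]
  have hcont : Continuous fun w : Fin n → ℚ_[p] => ‖(colMat γ w).det‖ :=
    ((continuous_colMat γ).matrix_det).norm
  obtain ⟨w₀, hw₀S, hmin⟩ := hS.exists_isMinOn hne hcont.continuousOn
  have hw₀ : w₀ ≠ 0 := by
    intro h
    have := Metric.mem_sphere.mp hw₀S
    rw [h] at this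
    simp at this
  refine ⟨‖(colMat γ w₀).det‖, norm_pos_iff.mpr (colMat_det_ne_zero hn γ hirr hw₀), ?_⟩
  intro w
  rcases eq_or_ne w 0 with rfl | hw
  · simp [norm_zero, zero_pow (by omega : n ≠ 0)]
  · -- find the coordinate attaining the sup norm
    obtain ⟨i₀, _, hi₀⟩ := Finset.exists_mem_eq_sup Finset.univ Finset.univ_nonempty
      (fun i => ‖w i‖₊)
    have hnorm : ‖w‖ = ‖w i₀‖ := by
      rw [Pi.norm_def, hi₀]; rfl
    set c : ℚ_[p] := w i₀ with hc
    have hc0 : c ≠ 0 := by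
      intro h
      apply hw
      have : ‖w‖ = 0 := by rw [hnorm, h, norm_zero]
      exact norm_eq_zero.mp this
    set w' : Fin n → ℚ_[p] := c⁻¹ • w with hw'
    have hw'n : ‖w'‖ = 1 := by
      rw [hw', norm_smul, norm_inv, ← hnorm,
        inv_mul_cancel₀ (norm_ne_zero_iff.mpr hw)]
    have hsm : colMat γ w = c • colMat γ w' := by
      ext i k
      simp only [colMat, Matrix.smul_apply, Matrix.of_apply, hw', Matrix.mulVec_smul,
        Pi.smul_apply, smul_eq_mul]
      rw [mul_inv_cancel_left₀ hc0]
    have hdet : (colMat γ w).det = c ^ n * (colMat γ w').det := by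
      rw [hsm, Matrix.det_smul]
      simp
    rw [hdet, norm_mul, norm_pow, ← hnorm]
    have hmem : w' ∈ Metric.sphere (0 : Fin n → ℚ_[p]) 1 := by
      simpa using hw'n
    have := hmin hmem
    simp only [Set.mem_setOf_eq] at this
    calc ‖(colMat γ w₀).det‖ * ‖w‖ ^ n ≤ ‖(colMat γ w').det‖ * ‖w‖ ^ n := by
          apply mul_le_mul_of_nonneg_right this (by positivity)
      _ = ‖w‖ ^ n * ‖(colMat γ w').det‖ := mul_comm _ _

end Aux

/-- For `γ ∈ SL_n(ℚ_p)` with irreducible characteristic polynomial (i.e. `γ` regular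
elliptic), the set of `g ∈ SL_n(ℚ_p)` with `g⁻¹ γ g` integral is compact. -/
theorem compact_conjugation_set_SL
    (p : ℕ) [Fact p.Prime] (n : ℕ) (hn : 1 ≤ n)
    (γ : Matrix (Fin n) (Fin n) ℚ_[p]) (hγ : γ.det = 1)
    (hirr : Irreducible γ.charpoly) :
    IsCompact {g : Matrix (Fin n) (Fin n) ℚ_[p] |
      g.det = 1 ∧ ∀ i j, ‖(g⁻¹ * γ * g) i j‖ ≤ 1} := by
  have : Nonempty (Fin n) := ⟨⟨0, hn⟩⟩
  set S := {g : Matrix (Fin n) (Fin n) ℚ_[p] |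
      g.det = 1 ∧ ∀ i j, ‖(g⁻¹ * γ * g) i j‖ ≤ 1} with hSdef
  -- On the set, the inverse equals the adjugate, giving closedness
  have hinv : ∀ g : Matrix (Fin n) (Fin n) ℚ_[p], g.det = 1 → g⁻¹ = g.adjugate := by
    intro g hg
    rw [Matrix.inv_def, hg, Ring.inverse_one, one_smul]
  have hSalt : S = {g : Matrix (Fin n) (Fin n) ℚ_[p] | g.det = 1} ∩
      {g | ∀ i j, ‖(g.adjugate * γ * g) i j‖ ≤ 1} := by
    ext g
    simp only [hSdef, Set.mem_setOf_eq, Set.mem_inter_iff]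
    constructor
    · rintro ⟨h1, h2⟩; exact ⟨h1, by rwa [← hinv g h1]⟩
    · rintro ⟨h1, h2⟩; exact ⟨h1, by rwa [hinv g h1]⟩
  have hclosed : IsClosed S := by
    rw [hSalt]
    apply IsClosed.inter
    · exact isClosed_singleton.preimage (continuous_id.matrix_det)
    · have : {g : Matrix (Fin n) (Fin n) ℚ_[p] | ∀ i j, ‖(g.adjugate * γ * g) i j‖ ≤ 1}
          = ⋂ i, ⋂ j, {g | ‖(g.adjugate * γ * g) i j‖ ≤ 1} := by
        ext g; simp
      rw [this]
      refine isClosed_iInter fun i => isClosed_iInter fun j => ?_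
      have hc : Continuous fun g : Matrix (Fin n) (Fin n) ℚ_[p] =>
          ‖(g.adjugate * γ * g) i j‖ :=
        (((continuous_id.matrix_adjugate.matrix_mul continuous_const).matrix_mul
          continuous_id).matrix_elem i j).norm
      exact isClosed_le hc continuous_const
  -- boundedness
  obtain ⟨δ, hδ, hbound⟩ := exists_delta hn γ hirr
  set R : ℝ := max 1 (1 / δ) with hR
  have hboundS : ∀ g ∈ S, ∀ i j, ‖g i j‖ ≤ R := by
    rintro g ⟨hg1, hg2⟩ i j
    have hu : IsUnit g.det := by rw [hg1]; exact isUnit_one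
    set M := g⁻¹ * γ * g with hM
    -- entries of M are integral, lift to ℤ_[p]
    set M' : Matrix (Fin n) (Fin n) ℤ_[p] := Matrix.of fun a b => (⟨M a b, hg2 a b⟩ : ℤ_[p])
      with hM'
    have hMcoe : (PadicInt.Coe.ringHom (p := p)).mapMatrix M' = M := by
      ext a b; rfl
    have hMk : ∀ k : ℕ, M ^ k = g⁻¹ * γ ^ k * g := by
      intro k
      induction k with
      | zero => simp [Matrix.nonsing_inv_mul g hu]
      | succ k ih =>
        rw [pow_succ, ih, pow_succ, hM, mul_assoc (g⁻¹ * γ ^ k) g (g⁻¹ * γ * g),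
          mul_assoc g⁻¹ γ g, Matrix.mul_nonsing_inv_cancel_left g (γ * g) hu]
        simp [mul_assoc]
    -- column j of g
    set w : Fin n → ℚ_[p] := fun a => g a j with hw
    -- colMat γ w = g * (matrix with entries (M^k) l j)
    set C' : Matrix (Fin n) (Fin n) ℤ_[p] := Matrix.of fun l k => (M' ^ (k : ℕ)) l j with hC'
    have hMk' : ∀ k : ℕ, (PadicInt.Coe.ringHom (p := p)).mapMatrix (M' ^ k) = M ^ k := by
      intro k
      rw [map_pow, hMcoe]
    have hfact : colMat γ w = g * (C'.map (PadicInt.Coe.ringHom (p := p))) := by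
      ext i k
      simp only [colMat, Matrix.of_apply, Matrix.mulVec, dotProduct, Matrix.mul_apply,
        Matrix.map_apply, hC', hw]
      have h1 : ∀ l, ((C'.map (PadicInt.Coe.ringHom (p := p))) l k) = (M ^ (k : ℕ)) l j := by
        intro l
        have := congrArg (fun A => A l j) (hMk' (k : ℕ))
        simpa [Matrix.map_apply, hC'] using this
      calc ∑ l, (γ ^ (k : ℕ)) i l * g l j = (γ ^ (k : ℕ) * g) i j := by
            rw [Matrix.mul_apply]
        _ = (g * (g⁻¹ * (γ ^ (k : ℕ) * g))) i j := by
            rw [Matrix.mul_nonsing_inv_cancel_left g (γ ^ (k : ℕ) * g) hu]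
        _ = (g * (M ^ (k : ℕ))) i j := by rw [hMk, mul_assoc]
        _ = ∑ l, g i l * ((C'.map (PadicInt.Coe.ringHom (p := p))) l k) := by
            rw [Matrix.mul_apply]
            congr 1
            ext l
            rw [h1 l, hMk]
    have hdetle : ‖(colMat γ w).det‖ ≤ 1 := by
      have hrfl : C'.map ⇑(PadicInt.Coe.ringHom (p := p))
          = (PadicInt.Coe.ringHom (p := p)).mapMatrix C' := rfl
      rw [hfact, Matrix.det_mul, hg1, one_mul, hrfl, ← RingHom.map_det]
      exact PadicInt.norm_le_one _
    have hwn : ‖w‖ ^ n ≤ 1 / δ := by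
      rw [le_div_iff₀ hδ, mul_comm]
      exact le_trans (hbound w) hdetle
    have hwR : ‖w‖ ≤ R := by
      rcases le_or_gt ‖w‖ 1 with h | h
      · exact le_trans h (le_max_left _ _)
      · have h2 : ‖w‖ ≤ ‖w‖ ^ n := le_self_pow₀ h.le (by omega)
        exact le_trans (le_trans h2 hwn) (le_max_right _ _)
    exact le_trans (norm_le_pi_norm w i) hwR
  -- the big compact box
  have hbox : IsCompact (Set.univ.pi fun _ : Fin n =>
      (Set.univ.pi fun _ : Fin n => Metric.closedBall (0 : ℚ_[p]) R)) :=
    isCompact_univ_pi fun _ => isCompact_univ_pi fun _ => isCompact_closedBall _ _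
  apply hbox.of_isClosed_subset hclosed
  intro g hg
  rw [Set.mem_univ_pi]
  intro i
  rw [Set.mem_univ_pi]
  intro j
  rw [Metric.mem_closedBall, dist_zero_right]
  exact hboundS g hg i j
end

section
/- Let p be a prime, n ≥ 1, and let γ ∈ GL_n(ℚ_p) have irreducible characteristic polynomial over ℚ_p. Then the centralizer of γ in SL_n(ℚ_p), i.e. {g ∈ SL_n(ℚ_p) : g·γ = γ·g}, is a compact subgroup of SL_n(ℚ_p). -/
open Matrix Polynomial

/-- Any nonzero matrix commuting with a matrix whose characteristic polynomial is
irreducible has nonzero determinant. -/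
private lemma aux_det_ne_zero {p : ℕ} [Fact p.Prime] {n : ℕ}
    {γ : Matrix (Fin n) (Fin n) ℚ_[p]} (hirr : Irreducible γ.charpoly)
    {h : Matrix (Fin n) (Fin n) ℚ_[p]} (hcomm : h * γ = γ * h) (hne : h ≠ 0) :
    h.det ≠ 0 := by
  intro hdet
  obtain ⟨v, hv0, hv⟩ := Matrix.exists_mulVec_eq_zero_iff.mpr hdet
  have hC : Commute h γ := hcomm
  -- h commutes with every polynomial in γ
  have hcomm' : ∀ q : ℚ_[p][X], h * aeval γ q = aeval γ q * h := by
    intro q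
    induction q using Polynomial.induction_on' with
    | add f g hf hg => rw [map_add, mul_add, add_mul, hf, hg]
    | monomial k c =>
        rw [Polynomial.aeval_monomial]
        have hA : Commute h ((algebraMap ℚ_[p] (Matrix (Fin n) (Fin n) ℚ_[p])) c) :=
          (Algebra.commutes c h).symm
        exact hA.mul_right (hC.pow_right k)
  have hkill : ∀ q : ℚ_[p][X], h *ᵥ (aeval γ q *ᵥ v) = 0 := by
    intro q
    rw [Matrix.mulVec_mulVec, hcomm' q, ← Matrix.mulVec_mulVec, hv, Matrix.mulVec_zero]
  -- the vectors γ^i v are linearly independent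
  have hli : LinearIndependent ℚ_[p] (fun i : Fin n => (γ ^ (i : ℕ)) *ᵥ v) := by
    rw [Fintype.linearIndependent_iff]
    intro c hc
    by_contra hcne
    push_neg at hcne
    obtain ⟨i₀, hi₀⟩ := hcne
    set q : ℚ_[p][X] := ∑ i : Fin n, Polynomial.C (c i) * Polynomial.X ^ (i : ℕ) with hq
    have haq : aeval γ q = ∑ i : Fin n, c i • γ ^ (i : ℕ) := by
      rw [hq, map_sum]
      refine Finset.sum_congr rfl fun i _ => ?_
      rw [_root_.map_mul, Polynomial.aeval_C, map_pow, Polynomial.aeval_X,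
        Algebra.algebraMap_eq_smul_one, smul_mul_assoc, one_mul]
    have hqv : aeval γ q *ᵥ v = 0 := by
      have h1 : Matrix.toLin' (aeval γ q) v = 0 := by
        rw [haq, map_sum]
        rw [LinearMap.sum_apply]
        have : ∀ i : Fin n, (Matrix.toLin' (c i • γ ^ (i : ℕ))) v
            = c i • ((γ ^ (i : ℕ)) *ᵥ v) := by
          intro i
          rw [_root_.map_smul, LinearMap.smul_apply, Matrix.toLin'_apply]
        rw [Finset.sum_congr rfl fun i _ => this i]
        exact hc
      rwa [Matrix.toLin'_apply] at h1
    -- q is nonzero of degree < n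
    have hcoeff : q.coeff (i₀ : ℕ) = c i₀ := by
      rw [hq, Polynomial.finset_sum_coeff]
      rw [Finset.sum_eq_single i₀]
      · rw [Polynomial.coeff_C_mul, Polynomial.coeff_X_pow, if_pos rfl, mul_one]
      · intro i _ hne'
        rw [Polynomial.coeff_C_mul, Polynomial.coeff_X_pow,
          if_neg (fun hh => hne' (Fin.val_injective hh.symm)), mul_zero]
      · intro habs
        exact absurd (Finset.mem_univ i₀) habs
    have hq0 : q ≠ 0 := fun h0 => hi₀ (by rw [← hcoeff, h0, Polynomial.coeff_zero])
    have hdeg : q.degree < (n : ℕ) := by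
      rw [hq]
      apply lt_of_le_of_lt (Polynomial.degree_sum_le _ _)
      rw [Finset.sup_lt_iff (by exact_mod_cast WithBot.bot_lt_coe (n : ℕ))]
      intro i _
      refine lt_of_le_of_lt (Polynomial.degree_C_mul_X_pow_le _ _) ?_
      exact_mod_cast i.isLt
    have hdvd : ¬ γ.charpoly ∣ q := by
      intro hd
      have h2 := Polynomial.degree_le_of_dvd hd hq0
      rw [γ.charpoly_degree_eq_dim, Fintype.card_fin] at h2
      exact absurd (lt_of_le_of_lt h2 hdeg) (lt_irrefl _)
    obtain ⟨a, b, hab⟩ := (hirr.coprime_iff_not_dvd).mpr hdvd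
    have h3 : aeval γ b * aeval γ q = 1 := by
      have h4 : aeval γ (a * γ.charpoly + b * q) = 1 := by rw [hab, _root_.map_one]
      rwa [map_add, _root_.map_mul, _root_.map_mul, Matrix.aeval_self_charpoly, mul_zero, zero_add] at h4
    have : v = 0 := by
      calc v = (1 : Matrix (Fin n) (Fin n) ℚ_[p]) *ᵥ v := (Matrix.one_mulVec v).symm
        _ = (aeval γ b * aeval γ q) *ᵥ v := by rw [h3]
        _ = aeval γ b *ᵥ (aeval γ q *ᵥ v) := (Matrix.mulVec_mulVec _ _ _).symm
        _ = 0 := by rw [hqv, Matrix.mulVec_zero]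
    exact hv0 this
  -- these vectors all lie in the kernel of h
  have hmem : ∀ i : Fin n, (γ ^ (i : ℕ)) *ᵥ v ∈ LinearMap.ker h.mulVecLin := by
    intro i
    rw [LinearMap.mem_ker, Matrix.mulVecLin_apply]
    have h5 := hkill (Polynomial.X ^ (i : ℕ))
    rwa [map_pow, Polynomial.aeval_X] at h5
  have hli' : LinearIndependent ℚ_[p]
      (fun i : Fin n => (⟨(γ ^ (i : ℕ)) *ᵥ v, hmem i⟩ : LinearMap.ker h.mulVecLin)) :=
    LinearIndependent.of_comp (LinearMap.ker h.mulVecLin).subtype hli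
  have hcard : n ≤ Module.finrank ℚ_[p] (LinearMap.ker h.mulVecLin) := by
    simpa using hli'.fintype_card_le_finrank
  have htop : LinearMap.ker h.mulVecLin = ⊤ := by
    apply Submodule.eq_top_of_finrank_eq
    apply le_antisymm (Submodule.finrank_le _)
    rw [Module.finrank_pi, Fintype.card_fin]
    exact hcard
  have h0 : h = 0 := by
    apply Matrix.toLin'.injective
    rw [Matrix.toLin'_apply', LinearMap.ker_eq_top.mp htop, map_zero]
  exact hne h0

section

attribute [local instance] Matrix.normedAddCommGroup Matrix.normedSpace

private lemma compact_centralizer_aux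
    (p : ℕ) [Fact p.Prime] (n : ℕ) (hn : 1 ≤ n)
    (γ : Matrix (Fin n) (Fin n) ℚ_[p]) (hγ : IsUnit γ.det)
    (hirr : Irreducible γ.charpoly) :
    IsCompact {g : Matrix (Fin n) (Fin n) ℚ_[p] | g.det = 1 ∧ g * γ = γ * g} := by
  haveI : Nonempty (Fin n) := ⟨⟨0, hn⟩⟩
  haveI : ProperSpace (Matrix (Fin n) (Fin n) ℚ_[p]) := FiniteDimensional.proper ℚ_[p] _
  -- the "unit sphere" of the commutant
  set T : Set (Matrix (Fin n) (Fin n) ℚ_[p]) := {h | h * γ = γ * h ∧ ‖h‖ = 1} with hT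
  have hTcl : IsClosed T := by
    apply IsClosed.inter
    · exact isClosed_eq (Continuous.matrix_mul continuous_id continuous_const)
        (Continuous.matrix_mul continuous_const continuous_id)
    · exact isClosed_eq continuous_norm continuous_const
  have hTcomp : IsCompact T := by
    apply (isCompact_closedBall (0 : Matrix (Fin n) (Fin n) ℚ_[p]) 1).of_isClosed_subset hTcl
    intro h hh
    rw [Metric.mem_closedBall, dist_zero_right, hh.2]
  have hone : ‖(1 : Matrix (Fin n) (Fin n) ℚ_[p])‖ = 1 := by
    apply le_antisymm
    · rw [Matrix.norm_le_iff zero_le_one]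
      intro i j
      by_cases hij : i = j
      · subst hij; simp [Matrix.one_apply_eq]
      · simp [Matrix.one_apply_ne hij]
    · have h6 := Matrix.norm_entry_le_entrywise_sup_norm
        (1 : Matrix (Fin n) (Fin n) ℚ_[p]) (i := ⟨0, hn⟩) (j := ⟨0, hn⟩)
      rwa [Matrix.one_apply_eq, norm_one] at h6
  have hTne : T.Nonempty := ⟨1, by rw [hT]; exact ⟨by rw [one_mul, mul_one], hone⟩⟩
  obtain ⟨h₀, hh₀, hmin⟩ := hTcomp.exists_isMinOn hTne
    ((continuous_norm.comp (Continuous.matrix_det continuous_id)).continuousOn)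
  set m : ℝ := ‖h₀.det‖ with hm
  have hmpos : 0 < m := by
    rw [hm, norm_pos_iff]
    apply aux_det_ne_zero hirr hh₀.1
    intro h0
    have h7 := hh₀.2
    rw [h0, norm_zero] at h7
    exact one_ne_zero h7.symm
  -- every element of the centralizer has norm at most R
  set R : ℝ := max 1 (1 / m) with hR
  have hsub : {g : Matrix (Fin n) (Fin n) ℚ_[p] | g.det = 1 ∧ g * γ = γ * g}
      ⊆ Metric.closedBall 0 R := by
    rintro g ⟨hgdet, hgcomm⟩
    rw [Metric.mem_closedBall, dist_zero_right]
    have hg0 : g ≠ 0 := by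
      intro h0
      rw [h0, Matrix.det_zero] at hgdet
      exact zero_ne_one hgdet
    have hgn : 0 < ‖g‖ := norm_pos_iff.mpr hg0
    -- find an entry realizing the sup norm
    obtain ⟨i, -, hi⟩ := Finset.exists_mem_eq_sup Finset.univ Finset.univ_nonempty
      (fun i => ‖g i‖₊)
    obtain ⟨j, -, hj⟩ := Finset.exists_mem_eq_sup Finset.univ Finset.univ_nonempty
      (fun j => ‖g i j‖₊)
    have hentry : ‖g i j‖ = ‖g‖ := by
      have : ‖g‖₊ = ‖g i j‖₊ := by
        rw [Matrix.nnnorm_def, Pi.nnnorm_def, hi, Pi.nnnorm_def, hj]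
      exact congrArg NNReal.toReal this.symm
    have hgij : g i j ≠ 0 := by
      intro h0
      rw [h0, norm_zero] at hentry
      exact (ne_of_gt hgn) hentry.symm
    set c : ℚ_[p] := (g i j)⁻¹ with hc
    have hcn : ‖c‖ = ‖g‖⁻¹ := by rw [hc, norm_inv, hentry]
    have hmemT : c • g ∈ T := by
      constructor
      · rw [smul_mul_assoc, mul_smul_comm, hgcomm]
      · rw [norm_smul, hcn, inv_mul_cancel₀ (ne_of_gt hgn)]
    have hminle : m ≤ ‖(c • g).det‖ := hmin hmemT
    have hdetc : ‖(c • g).det‖ = (‖g‖ ^ n)⁻¹ := by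
      rw [Matrix.det_smul, Fintype.card_fin, hgdet, mul_one, norm_pow, hcn, inv_pow]
    rw [hdetc] at hminle
    have hpown : (0:ℝ) < ‖g‖ ^ n := pow_pos hgn n
    have hle : ‖g‖ ^ n ≤ 1 / m := by
      rw [le_div_iff₀ hmpos]
      calc ‖g‖ ^ n * m ≤ ‖g‖ ^ n * (‖g‖ ^ n)⁻¹ :=
            mul_le_mul_of_nonneg_left hminle (le_of_lt hpown)
        _ = 1 := mul_inv_cancel₀ (ne_of_gt hpown)
    rcases le_total ‖g‖ 1 with h1 | h1
    · exact le_trans h1 (le_max_left _ _)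
    · calc ‖g‖ ≤ ‖g‖ ^ n := le_self_pow₀ h1 (by omega)
        _ ≤ 1 / m := hle
        _ ≤ R := le_max_right _ _
  have hScl : IsClosed {g : Matrix (Fin n) (Fin n) ℚ_[p] | g.det = 1 ∧ g * γ = γ * g} := by
    apply IsClosed.inter
    · exact isClosed_eq (Continuous.matrix_det continuous_id) continuous_const
    · exact isClosed_eq (Continuous.matrix_mul continuous_id continuous_const)
        (Continuous.matrix_mul continuous_const continuous_id)
  exact (isCompact_closedBall (0 : Matrix (Fin n) (Fin n) ℚ_[p]) R).of_isClosed_subset hScl hsub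

end

/-- For `γ ∈ GL_n(ℚ_p)` with irreducible characteristic polynomial, the centralizer
of `γ` in `SL_n(ℚ_p)` is compact. -/
theorem compact_centralizer_in_SL
    (p : ℕ) [Fact p.Prime] (n : ℕ) (hn : 1 ≤ n)
    (γ : Matrix (Fin n) (Fin n) ℚ_[p]) (hγ : IsUnit γ.det)
    (hirr : Irreducible γ.charpoly) :
    IsCompact {g : Matrix (Fin n) (Fin n) ℚ_[p] | g.det = 1 ∧ g * γ = γ * g} := by
  exact compact_centralizer_aux p n hn γ hγ hirr
end

section
/- Let p be a prime and n ≥ 1. Let γ ∈ GL_n(ℚ_p) be a diagonal matrix whose diagonal entries are pairwise distinct elements of ℚ_pˣ. Then the set of upper triangular unipotent matrices u (i.e. u has 1's on the diagonal and 0's below the diagonal) such that every entry of u⁻¹ · γ · u lies in ℤ_p is a compact subset of the matrix space. -/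
/-!
Write `B = u⁻¹ γ u`. Both `u` and `B` are upper triangular and `B` has the same diagonal as `γ`,
so comparing the `(i, j)` entries of `u B = γ u` gives
`(γᵢ - γⱼ) uᵢⱼ = ∑_{k < j} uᵢₖ Bₖⱼ`.
If `B` is integral, the ultrametric inequality bounds `‖uᵢⱼ‖` column by column in terms of
`maxᵢ≠ⱼ ‖γᵢ - γⱼ‖⁻¹`, so the set in question is a closed subset of a product of closed balls.
-/

open Finset

namespace Matrix

variable {ι R : Type*} [Fintype ι] [LinearOrder ι]

theorem IsUpperTriangular.mul_apply_self [NonUnitalNonAssocSemiring R] {A B : Matrix ι ι R}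
    (hA : A.IsUpperTriangular) (hB : B.IsUpperTriangular) (i : ι) :
    (A * B) i i = A i i * B i i := by
  rw [mul_apply, Finset.sum_eq_single i (fun k _ hki => ?_) (by simp)]
  rcases hki.lt_or_gt with hki | hki
  · rw [hA hki, zero_mul]
  · rw [hB hki, mul_zero]

variable [CommRing R] [DecidableEq ι] {u : Matrix ι ι R}

theorem IsUpperTriangular.det_eq_one (hu : u.IsUpperTriangular) (h1 : ∀ i, u i i = 1) :
    u.det = 1 := by
  simp [det_of_isUpperTriangular hu, h1]

theorem IsUpperTriangular.isUnit_det (hu : u.IsUpperTriangular) (h1 : ∀ i, u i i = 1) :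
    IsUnit u.det :=
  (hu.det_eq_one h1).symm ▸ isUnit_one

theorem IsUpperTriangular.inv (hu : u.IsUpperTriangular) (h1 : ∀ i, u i i = 1) :
    (u⁻¹).IsUpperTriangular :=
  have : Invertible u := u.invertibleOfIsUnitDet (hu.isUnit_det h1)
  blockTriangular_inv_of_blockTriangular hu

theorem IsUpperTriangular.inv_eq_adjugate (hu : u.IsUpperTriangular) (h1 : ∀ i, u i i = 1) :
    u⁻¹ = u.adjugate := by
  rw [inv_def, hu.det_eq_one h1, Ring.inverse_one, one_smul]

theorem IsUpperTriangular.inv_apply_self (hu : u.IsUpperTriangular) (h1 : ∀ i, u i i = 1)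
    (i : ι) : u⁻¹ i i = 1 := by
  simpa [h1, nonsing_inv_mul u (hu.isUnit_det h1)] using
    ((hu.inv h1).mul_apply_self hu i).symm

theorem IsUpperTriangular.conj_diagonal_isUpperTriangular (hu : u.IsUpperTriangular)
    (h1 : ∀ i, u i i = 1) (d : ι → R) : (u⁻¹ * diagonal d * u).IsUpperTriangular :=
  ((hu.inv h1).mul (blockTriangular_diagonal d)).mul hu

theorem IsUpperTriangular.conj_diagonal_apply_self (hu : u.IsUpperTriangular)
    (h1 : ∀ i, u i i = 1) (d : ι → R) (i : ι) : (u⁻¹ * diagonal d * u) i i = d i := by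
  have hleft : (u⁻¹ * diagonal d).IsUpperTriangular := (hu.inv h1).mul (blockTriangular_diagonal d)
  rw [hleft.mul_apply_self hu, (hu.inv h1).mul_apply_self (blockTriangular_diagonal d),
    hu.inv_apply_self h1, h1, diagonal_apply_eq, one_mul, mul_one]

theorem IsUpperTriangular.sub_mul_apply_eq_sum_Iio [LocallyFiniteOrderBot ι]
    (hu : u.IsUpperTriangular) (h1 : ∀ i, u i i = 1) (d : ι → R) (i j : ι) :
    (d i - d j) * u i j = ∑ k ∈ Iio j, u i k * (u⁻¹ * diagonal d * u) k j := by
  have hconj : u * (u⁻¹ * diagonal d * u) = diagonal d * u := by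
    rw [← Matrix.mul_assoc, mul_nonsing_inv_cancel_left _ _ (hu.isUnit_det h1)]
  have hBtri := hu.conj_diagonal_isUpperTriangular h1 d
  have hBdiag := hu.conj_diagonal_apply_self h1 d j
  set B := u⁻¹ * diagonal d * u
  have hentry : ∑ k, u i k * B k j = d i * u i j := by
    rw [← mul_apply, hconj, diagonal_mul]
  have hIic : ∑ k ∈ Iic j, u i k * B k j = ∑ k, u i k * B k j :=
    sum_subset (subset_univ _) fun k _ hk => by
      rw [hBtri (not_le.mp (mem_Iic.not.mp hk)), mul_zero]
  rw [← sum_Iio_add_eq_sum_Iic, hBdiag] at hIic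
  linear_combination -hIic - hentry

end Matrix

theorem norm_apply_le_pow_of_norm_conj_diagonal_le_one {K : Type*} [NormedField K]
    [IsUltrametricDist K] {n : ℕ} {u : Matrix (Fin n) (Fin n) K} (hu : u.IsUpperTriangular)
    (h1 : ∀ i, u i i = 1) {d : Fin n → K} (hd : Function.Injective d) {M : ℝ} (hM1 : 1 ≤ M)
    (hM : ∀ i j, ‖d i - d j‖⁻¹ ≤ M)
    (hB : ∀ i j, ‖(u⁻¹ * Matrix.diagonal d * u) i j‖ ≤ 1) (i j : Fin n) :
    ‖u i j‖ ≤ M ^ ((j : ℕ) + 1) := by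
  induction j using WellFoundedLT.induction with
  | ind j ih =>
  obtain rfl | hij := eq_or_ne i j
  · simpa [h1] using one_le_pow₀ hM1
  have hsum : ‖∑ k ∈ Iio j, u i k * (u⁻¹ * Matrix.diagonal d * u) k j‖ ≤ M ^ (j : ℕ) := by
    refine IsUltrametricDist.norm_sum_le_of_forall_le_of_nonneg (by positivity) fun k hk => ?_
    calc ‖u i k * (u⁻¹ * Matrix.diagonal d * u) k j‖ ≤ M ^ ((k : ℕ) + 1) * 1 := by
          rw [norm_mul]
          exact mul_le_mul (ih k (mem_Iio.mp hk)) (hB k j) (norm_nonneg _) (by positivity)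
      _ ≤ M ^ (j : ℕ) := by
          rw [mul_one]
          exact pow_le_pow_right₀ hM1 (mem_Iio.mp hk)
  have hdij : d i - d j ≠ 0 := sub_ne_zero.mpr (hd.ne hij)
  calc ‖u i j‖ = ‖d i - d j‖⁻¹ * ‖(d i - d j) * u i j‖ := by
        rw [norm_mul, inv_mul_cancel_left₀ (norm_ne_zero_iff.mpr hdij)]
    _ ≤ M * M ^ (j : ℕ) := by
        rw [hu.sub_mul_apply_eq_sum_Iio h1]
        exact mul_le_mul (hM i j) hsum (norm_nonneg _) (by positivity)
    _ = M ^ ((j : ℕ) + 1) := (pow_succ' M _).symm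

theorem isClosed_setOf_unitriangular_norm_conj_le {K ι : Type*} [NormedField K] [Fintype ι]
    [DecidableEq ι] [LinearOrder ι] (D : Matrix ι ι K) (r : ℝ) :
    IsClosed {u : Matrix ι ι K | (∀ i, u i i = 1) ∧ (∀ i j : ι, j < i → u i j = 0) ∧
      ∀ i j, ‖(u⁻¹ * D * u) i j‖ ≤ r} := by
  have hadj : {u : Matrix ι ι K | (∀ i, u i i = 1) ∧ (∀ i j : ι, j < i → u i j = 0) ∧
      ∀ i j, ‖(u⁻¹ * D * u) i j‖ ≤ r} = {u | (∀ i, u i i = 1) ∧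
      (∀ i j : ι, j < i → u i j = 0) ∧ ∀ i j, ‖(u.adjugate * D * u) i j‖ ≤ r} := by
    ext u
    refine and_congr_right fun h1 => and_congr_right fun h2 => ?_
    rw [Matrix.IsUpperTriangular.inv_eq_adjugate (fun i j h => h2 i j h) h1]
  rw [hadj]
  simp only [Set.ofPred_and, Set.ofPred_forall]
  refine .inter (isClosed_iInter fun i => isClosed_eq (by fun_prop) continuous_const)
    (.inter (isClosed_iInter fun i => isClosed_iInter fun j => isClosed_iInter fun _ =>
      isClosed_eq (by fun_prop) continuous_const)
    (isClosed_iInter fun i => isClosed_iInter fun j => isClosed_le (by fun_prop) continuous_const))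

theorem compact_unipotent_conjugation_set_general
    (p : ℕ) [Fact p.Prime] (n : ℕ)
    (d : Fin n → ℚ_[p]) (hdinj : Function.Injective d) :
    IsCompact {u : Matrix (Fin n) (Fin n) ℚ_[p] |
      (∀ i, u i i = 1) ∧ (∀ i j : Fin n, j < i → u i j = 0) ∧
      ∀ i j, ‖(u⁻¹ * Matrix.diagonal d * u) i j‖ ≤ 1} := by
  obtain ⟨M, hM⟩ := Finite.bddAbove_range fun ij : Fin n × Fin n => ‖d ij.1 - d ij.2‖⁻¹
  have hbound (i j : Fin n) : ‖d i - d j‖⁻¹ ≤ max 1 M :=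
    (hM ⟨(i, j), rfl⟩).trans (le_max_right _ _)
  have hbox : IsCompact (Set.univ.pi fun _ : Fin n => Set.univ.pi fun _ : Fin n =>
      Metric.closedBall (0 : ℚ_[p]) (max 1 M ^ n)) :=
    isCompact_univ_pi fun _ => isCompact_univ_pi fun _ => isCompact_closedBall _ _
  refine hbox.of_isClosed_subset (isClosed_setOf_unitriangular_norm_conj_le _ _) ?_
  rintro u ⟨h1, h2, h3⟩ i - j -
  rw [mem_closedBall_zero_iff]
  calc ‖u i j‖ ≤ max 1 M ^ ((j : ℕ) + 1) :=
        norm_apply_le_pow_of_norm_conj_diagonal_le_one (fun i j h => h2 i j h) h1 hdinj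
          (le_max_left _ _) hbound h3 i j
    _ ≤ max 1 M ^ n := pow_le_pow_right₀ (le_max_left _ _) j.isLt

/-- Let `γ` be a diagonal matrix over `ℚ_p` with pairwise distinct nonzero diagonal
entries. The set of upper triangular unipotent matrices `u` such that `u⁻¹ γ u` has
all entries in `ℤ_p` is compact. -/
theorem compact_unipotent_conjugation_set
    (p : ℕ) [Fact p.Prime] (n : ℕ) (hn : 1 ≤ n)
    (d : Fin n → ℚ_[p]) (hd0 : ∀ i, d i ≠ 0) (hdinj : Function.Injective d) :
    IsCompact {u : Matrix (Fin n) (Fin n) ℚ_[p] |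
      (∀ i, u i i = 1) ∧ (∀ i j : Fin n, j < i → u i j = 0) ∧
      ∀ i j, ‖(u⁻¹ * Matrix.diagonal d * u) i j‖ ≤ 1} :=
  compact_unipotent_conjugation_set_general p n d hdinj
end

section
/- Let p be a prime and n ≥ 1. Let γ ∈ GL_n(ℚ_p) be a diagonal matrix whose diagonal entries are pairwise distinct elements of ℚ_pˣ. Then there exists a compact subset C of GL_n(ℚ_p) such that every g ∈ GL_n(ℚ_p) for which all entries of g⁻¹ · γ · g lie in ℤ_p can be written as g = t · c with t an invertible diagonal matrix and c ∈ C. -/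
open Matrix Polynomial Finset

private lemma padic_mul_entry_bound {p : ℕ} [Fact p.Prime] {n : ℕ}
    (X Y : Matrix (Fin n) (Fin n) ℚ_[p]) {a b : ℝ}
    (ha : 0 ≤ a)
    (hX : ∀ i j, ‖X i j‖ ≤ a) (hY : ∀ i j, ‖Y i j‖ ≤ b) (i j : Fin n) :
    ‖(X * Y) i j‖ ≤ n * (a * b) := by
  rw [Matrix.mul_apply]
  calc ‖∑ k, X i k * Y k j‖ ≤ ∑ k : Fin n, ‖X i k * Y k j‖ := norm_sum_le _ _
    _ ≤ ∑ _k : Fin n, a * b := by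
        refine Finset.sum_le_sum fun k _ => ?_
        rw [norm_mul]; exact mul_le_mul (hX i k) (hY k j) (norm_nonneg _) ha
    _ = n * (a * b) := by simp [mul_comm]

private lemma padic_prod_entry_bound {p : ℕ} [Fact p.Prime] {n : ℕ}
    (A : Matrix (Fin n) (Fin n) ℚ_[p]) (d : Fin n → ℚ_[p]) {M : ℝ}
    (hM : 1 ≤ M) (hA : ∀ i j, ‖A i j‖ ≤ 1) (hdM : ∀ j, 1 + ‖d j‖ ≤ M)
    (s : Finset (Fin n)) :
    ∀ i j, ‖(aeval A (∏ k ∈ s, (X - C (d k)))) i j‖ ≤ (n * M) ^ s.card := by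
  have hM0 : (0:ℝ) ≤ M := le_trans zero_le_one hM
  induction s using Finset.induction_on with
  | empty =>
      intro i j
      simp only [Finset.prod_empty, _root_.map_one, Finset.card_empty, pow_zero]
      by_cases h : i = j <;> simp [Matrix.one_apply, h]
  | insert _ _ hnotmem =>
      rename_i a s ih
      intro i j
      rw [Finset.prod_insert hnotmem, _root_.map_mul, Finset.card_insert_of_notMem hnotmem,
        pow_succ']
      have h1 : ∀ i j, ‖(aeval A (X - C (d a))) i j‖ ≤ M := by
        intro i j
        simp only [map_sub, aeval_X, aeval_C, Matrix.sub_apply, Matrix.algebraMap_matrix_apply]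
        refine le_trans (norm_sub_le _ _) ?_
        refine le_trans (add_le_add (hA i j) ?_) (hdM a)
        · by_cases h : i = j <;> simp [h, le_refl]
      calc ‖(aeval A (X - C (d a)) * aeval A (∏ k ∈ s, (X - C (d k)))) i j‖
          ≤ n * (M * (n * M) ^ s.card) := padic_mul_entry_bound _ _ hM0 h1 ih i j
        _ = n * M * (n * M) ^ s.card := by ring

private lemma padic_det_entry_bound {p : ℕ} [Fact p.Prime] {n : ℕ}
    (R : Matrix (Fin n) (Fin n) ℚ_[p]) {B : ℝ}
    (h : ∀ i j, ‖R i j‖ ≤ B) : ‖R.det‖ ≤ n.factorial * B ^ n := by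
  rw [Matrix.det_apply]
  refine le_trans (norm_sum_le _ _) ?_
  have hterm : ∀ σ : Equiv.Perm (Fin n), ‖Equiv.Perm.sign σ • ∏ i, R (σ i) i‖ ≤ B ^ n := by
    intro σ
    have : ‖Equiv.Perm.sign σ • ∏ i, R (σ i) i‖ = ‖∏ i, R (σ i) i‖ := by
      rcases Int.units_eq_one_or (Equiv.Perm.sign σ) with h1 | h1 <;>
        simp [h1, Units.smul_def]
    rw [this]
    calc ‖∏ i, R (σ i) i‖ = ∏ i, ‖R (σ i) i‖ := by rw [norm_prod]
      _ ≤ ∏ _i : Fin n, B := Finset.prod_le_prod (fun _ _ => norm_nonneg _) (fun i _ => h _ _)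
      _ = B ^ n := by simp
  refine le_trans (Finset.sum_le_sum fun σ _ => hterm σ) ?_
  simp [Fintype.card_perm]

private lemma padic_intertwine_pow {p : ℕ} [Fact p.Prime] {n : ℕ}
    (V A D : Matrix (Fin n) (Fin n) ℚ_[p]) (h : V * A = D * V) (k : ℕ) :
    V * A ^ k = D ^ k * V := by
  induction k with
  | zero => simp
  | succ m ih => rw [pow_succ, pow_succ, ← Matrix.mul_assoc, ih, Matrix.mul_assoc, h,
      ← Matrix.mul_assoc]

private lemma padic_intertwine {p : ℕ} [Fact p.Prime] {n : ℕ}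
    (V A D : Matrix (Fin n) (Fin n) ℚ_[p]) (h : V * A = D * V) (f : ℚ_[p][X]) :
    V * aeval A f = aeval D f * V := by
  induction f using Polynomial.induction_on with
  | C a => rw [aeval_C, aeval_C]; exact (Algebra.commutes a V).symm
  | add f g hf hg => simp [Matrix.mul_add, Matrix.add_mul, hf, hg]
  | monomial k a _ =>
      simp only [_root_.map_mul, map_pow, aeval_X, aeval_C]
      calc V * (algebraMap ℚ_[p] _ a * A ^ (k+1))
          = algebraMap ℚ_[p] _ a * (V * A ^ (k+1)) := by
            rw [← Matrix.mul_assoc, ← Algebra.commutes a V, Matrix.mul_assoc]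
        _ = algebraMap ℚ_[p] _ a * (D ^ (k+1) * V) := by rw [padic_intertwine_pow V A D h]
        _ = algebraMap ℚ_[p] _ a * D ^ (k+1) * V := by rw [Matrix.mul_assoc]

private lemma padic_aeval_diagonal {p : ℕ} [Fact p.Prime] {n : ℕ}
    (d : Fin n → ℚ_[p]) (f : ℚ_[p][X]) :
    aeval (Matrix.diagonal d) f = Matrix.diagonal (fun i => f.eval (d i)) := by
  induction f using Polynomial.induction_on with
  | C a => simp only [aeval_C, eval_C, algebraMap_eq_diagonal]; rfl
  | add f g hf hg => simp [hf, hg, Matrix.diagonal_add]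
  | monomial k a ih =>
      simp only [pow_succ, ← mul_assoc, _root_.map_mul, ih, aeval_X, eval_mul, eval_X,
        Matrix.diagonal_mul_diagonal]

/-- Let `γ` be a diagonal matrix over `ℚ_p` with pairwise distinct nonzero diagonal
entries (a split regular semisimple element). The set of `g ∈ GL_n(ℚ_p)` with
`g⁻¹ γ g` integral is compact modulo the diagonal torus: it is contained in `T · C`
for a compact set `C`, where `T` is the group of invertible diagonal matrices. -/
theorem compact_mod_torus_conjugation_set_GL
    (p : ℕ) [Fact p.Prime] (n : ℕ) (hn : 1 ≤ n)
    (d : Fin n → ℚ_[p]) (hd0 : ∀ i, d i ≠ 0) (hdinj : Function.Injective d) :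
    ∃ C : Set (Matrix (Fin n) (Fin n) ℚ_[p]), IsCompact C ∧
      (∀ c ∈ C, IsUnit c.det) ∧
      ∀ g : Matrix (Fin n) (Fin n) ℚ_[p], IsUnit g.det →
        (∀ i j, ‖(g⁻¹ * Matrix.diagonal d * g) i j‖ ≤ 1) →
        ∃ (t : Fin n → ℚ_[p]ˣ) (c : Matrix (Fin n) (Fin n) ℚ_[p]),
          c ∈ C ∧ g = Matrix.diagonal (fun i => (t i : ℚ_[p])) * c := by
  classical
  -- constants
  set M : ℝ := 1 + ∑ j, ‖d j‖ with hMdef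
  have hM : 1 ≤ M := by
    have : 0 ≤ ∑ j, ‖d j‖ := Finset.sum_nonneg fun j _ => norm_nonneg _
    simp only [hMdef]; linarith
  have hdM : ∀ j, 1 + ‖d j‖ ≤ M := by
    intro j
    have : ‖d j‖ ≤ ∑ k, ‖d k‖ :=
      Finset.single_le_sum (fun k _ => norm_nonneg (d k)) (Finset.mem_univ j)
    simp only [hMdef]; linarith
  set B : ℝ := (n * M) ^ (n - 1) with hBdef
  have hB0 : 0 < B := by
    refine pow_pos ?_ _
    have : (1:ℝ) ≤ n := by exact_mod_cast hn
    nlinarith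
  set K : ℝ := n.factorial * B ^ n with hKdef
  have hK0 : 0 < K := by
    refine mul_pos ?_ (pow_pos hB0 _)
    exact_mod_cast n.factorial_pos
  set cpr : Fin n → ℚ_[p] := fun i => ∏ j ∈ Finset.univ.erase i, (d i - d j) with hcprdef
  have hcpr : ∀ i, cpr i ≠ 0 := by
    intro i
    refine Finset.prod_ne_zero_iff.mpr fun j hj => ?_
    exact sub_ne_zero.mpr fun h => (Finset.mem_erase.mp hj).1 (hdinj h).symm
  set Pc : ℝ := ∏ i, ‖cpr i‖ with hPcdef
  have hPc0 : 0 < Pc :=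
    Finset.prod_pos fun i _ => norm_pos_iff.mpr (hcpr i)
  set ε : ℝ := Pc / K with hεdef
  have hε0 : 0 < ε := div_pos hPc0 hK0
  refine ⟨{c : Matrix (Fin n) (Fin n) ℚ_[p] | (∀ i j, ‖c i j‖ ≤ 1) ∧ ε ≤ ‖c.det‖}, ?_, ?_, ?_⟩
  · -- compactness
    have hS : IsCompact {c : Matrix (Fin n) (Fin n) ℚ_[p] | ∀ i j, ‖c i j‖ ≤ 1} := by
      have : {c : Matrix (Fin n) (Fin n) ℚ_[p] | ∀ i j, ‖c i j‖ ≤ 1} =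
          Set.pi Set.univ (fun _ : Fin n => Set.pi Set.univ
            (fun _ : Fin n => Metric.closedBall (0:ℚ_[p]) 1)) := by
        ext c
        constructor
        · intro h
          exact fun i _ => fun j _ => by simpa [dist_zero_right] using h i j
        · intro h i j
          simpa [dist_zero_right] using h i (Set.mem_univ i) j (Set.mem_univ j)
      rw [this]
      exact isCompact_univ_pi fun i => isCompact_univ_pi fun j => isCompact_closedBall _ _
    have hT : IsClosed {c : Matrix (Fin n) (Fin n) ℚ_[p] | ε ≤ ‖c.det‖} :=
      isClosed_le continuous_const (continuous_id.matrix_det.norm)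
    exact hS.inter_right hT
  · -- unit determinants
    intro c hc
    refine isUnit_iff_ne_zero.mpr fun h => ?_
    have := hc.2
    rw [h] at this
    simp at this
    linarith
  · -- main statement
    intro g hg hA
    set A : Matrix (Fin n) (Fin n) ℚ_[p] := g⁻¹ * Matrix.diagonal d * g with hAdef
    -- pick a maximal entry in each row
    have hrow : ∀ i : Fin n, ∃ j₀ : Fin n, ∀ j, ‖g i j‖ ≤ ‖g i j₀‖ := by
      intro i
      obtain ⟨j₀, _, hj₀⟩ := Finset.exists_max_image Finset.univ (fun j => ‖g i j‖)
        (Finset.univ_nonempty_iff.mpr (Fin.pos_iff_nonempty.mp hn))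
      exact ⟨j₀, fun j => hj₀ j (Finset.mem_univ j)⟩
    choose m hm using hrow
    have hg0 : ∀ i, g i (m i) ≠ 0 := by
      intro i h0
      have hzero : ∀ j, g i j = 0 := by
        intro j
        have := hm i j
        rw [h0, norm_zero] at this
        exact norm_le_zero_iff.mp this
      exact (isUnit_iff_ne_zero.mp hg) (Matrix.det_eq_zero_of_row_eq_zero i hzero)
    set t : Fin n → ℚ_[p]ˣ := fun i => Units.mk0 _ (hg0 i) with htdef
    set V : Matrix (Fin n) (Fin n) ℚ_[p] :=
      Matrix.diagonal (fun i => (((t i)⁻¹ : ℚ_[p]ˣ) : ℚ_[p])) * g with hVdef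
    have hVentry : ∀ i j, V i j = (g i (m i))⁻¹ * g i j := by
      intro i j
      simp [hVdef, Matrix.diagonal_mul, htdef]
    have hVone : ∀ i, V i (m i) = 1 := by
      intro i
      rw [hVentry]
      exact inv_mul_cancel₀ (hg0 i)
    have hVle : ∀ i j, ‖V i j‖ ≤ 1 := by
      intro i j
      rw [hVentry, norm_mul, norm_inv]
      rw [inv_mul_le_iff₀ (norm_pos_iff.mpr (hg0 i))]
      simpa using hm i j
    -- intertwining relation
    have hgA : g * A = Matrix.diagonal d * g := by
      rw [hAdef, ← Matrix.mul_assoc, ← Matrix.mul_assoc, Matrix.mul_nonsing_inv g hg, one_mul]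
    have hcomm : Matrix.diagonal (fun i => (((t i)⁻¹ : ℚ_[p]ˣ) : ℚ_[p])) * Matrix.diagonal d
        = Matrix.diagonal d * Matrix.diagonal (fun i => (((t i)⁻¹ : ℚ_[p]ˣ) : ℚ_[p])) := by
      ext i j
      simp only [Matrix.diagonal_mul_diagonal, Matrix.diagonal_apply]
      by_cases h : i = j
      · subst h; simp [mul_comm]
      · simp [h]
    have hVA : V * A = Matrix.diagonal d * V := by
      rw [hVdef, Matrix.mul_assoc, hgA, ← Matrix.mul_assoc, hcomm, Matrix.mul_assoc]
    -- Lagrange polynomials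
    set q : Fin n → ℚ_[p][X] :=
      fun i => ∏ k ∈ Finset.univ.erase i, (X - C (d k)) with hqdef
    have heval : ∀ i k, (q i).eval (d k) = if k = i then cpr i else 0 := by
      intro i k
      by_cases h : k = i
      · subst h
        rw [if_pos rfl]
        simp only [hqdef, eval_prod, eval_sub, eval_X, eval_C, hcprdef]
      · rw [if_neg h, hqdef, eval_prod]
        exact Finset.prod_eq_zero (Finset.mem_erase.mpr ⟨h, Finset.mem_univ k⟩)
          (by simp)
    -- the auxiliary matrix R
    set R : Matrix (Fin n) (Fin n) ℚ_[p] :=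
      Matrix.of (fun a b => (aeval A (q b)) a (m b)) with hRdef
    have hPbound : ∀ b i j, ‖(aeval A (q b)) i j‖ ≤ B := by
      intro b i j
      have := padic_prod_entry_bound A d hM hA hdM (Finset.univ.erase b) i j
      rwa [Finset.card_erase_of_mem (Finset.mem_univ b), Finset.card_univ,
        Fintype.card_fin] at this
    have hRB : ∀ a b, ‖R a b‖ ≤ B := fun a b => hPbound b a (m b)
    have hVR : V * R = Matrix.diagonal cpr := by
      ext k i
      have h1 : (V * R) k i = (V * aeval A (q i)) k (m i) := by
        rw [Matrix.mul_apply, Matrix.mul_apply]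
        rfl
      rw [h1, padic_intertwine V A (Matrix.diagonal d) hVA, padic_aeval_diagonal,
        Matrix.diagonal_mul, heval]
      by_cases h : k = i
      · subst h
        rw [if_pos rfl, hVone, mul_one, Matrix.diagonal_apply_eq]
      · rw [if_neg h, zero_mul, Matrix.diagonal_apply_ne _ h]
    have hdetVR : V.det * R.det = ∏ i, cpr i := by
      rw [← Matrix.det_mul, hVR, Matrix.det_diagonal]
    have hRdet : ‖R.det‖ ≤ K := by
      rw [hKdef]
      exact padic_det_entry_bound R hRB
    have hRne : R.det ≠ 0 := by
      intro h
      rw [h, mul_zero] at hdetVR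
      exact (Finset.prod_ne_zero_iff.mpr fun i _ => hcpr i) hdetVR.symm
    have hnormprod : ‖V.det‖ * ‖R.det‖ = Pc := by
      rw [← norm_mul, hdetVR, hPcdef, norm_prod]
    have hVdet : ε ≤ ‖V.det‖ := by
      have hRpos : 0 < ‖R.det‖ := norm_pos_iff.mpr hRne
      have hVeq : ‖V.det‖ = Pc / ‖R.det‖ := by
        field_simp [hRpos.ne'] at hnormprod ⊢
        linarith [hnormprod]
      rw [hVeq, hεdef]
      exact div_le_div_of_nonneg_left hPc0.le hRpos hRdet |>.trans_eq rfl
        |> fun h => h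
    refine ⟨t, V, ⟨hVle, hVdet⟩, ?_⟩
    rw [hVdef, ← Matrix.mul_assoc, Matrix.diagonal_mul_diagonal]
    have : (fun i => (t i : ℚ_[p]) * ((t i)⁻¹ : ℚ_[p]ˣ)) = fun _ => (1:ℚ_[p]) := by
      funext i
      simp
    rw [this]
    simp
end
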